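/- Let ρ be a pure state density matrix on ℂ^{d₁} ⊗ ℂ^{d₂} (i.e. ρ = |ψ⟩⟨ψ| for a unit vector ψ), with correlation tensor T^{(12)} having entries v_{i₁j₁,i₂j₂} = tr(ρ (A_{i₁j₁} ⊗ A_{i₂j₂})†) over nonzero Weyl indices on each factor. Then ‖T^{(12)}‖² ≤ min{d₁d₂ − d₁/d₂, d₁d₂ − d₂/d₁}. -/

import Mathlib

noncomputable def ch (d : ℕ) [NeZero d] (ω : ℂ) (x : ZMod d) : ℂ := ω ^ x.val

lemma pow_mod_eq (d : ℕ) {ω : ℂ} (hω : ω ^ d = 1) (n : ℕ) :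
    ω ^ (n % d) = ω ^ n := by
  conv_rhs => rw [← Nat.mod_add_div n d]
  rw [pow_add, pow_mul, hω, one_pow, mul_one]

lemma ch_add (d : ℕ) [NeZero d] {ω : ℂ} (hω : ω ^ d = 1) (x y : ZMod d) :
    ch d ω (x + y) = ch d ω x * ch d ω y := by
  rw [ch, ch, ch, ← pow_add, ZMod.val_add, pow_mod_eq d hω]

lemma ch_zero (d : ℕ) [NeZero d] (ω : ℂ) : ch d ω 0 = 1 := by
  simp [ch, ZMod.val_zero]

lemma ch_ne_zero (d : ℕ) [NeZero d] {ω : ℂ} (hω : ω ^ d = 1) (x : ZMod d) :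
    ch d ω x ≠ 0 := by
  have hω0 : ω ≠ 0 := by
    rintro rfl
    simp [zero_pow (NeZero.ne d)] at hω
  exact pow_ne_zero _ hω0

lemma ch_star (d : ℕ) [NeZero d] {ω : ℂ} (hω : IsPrimitiveRoot ω d) (x : ZMod d) :
    star (ch d ω x) = ch d ω (-x) := by
  have hωd : ω ^ d = 1 := hω.pow_eq_one
  have h1 : ch d ω x * ch d ω (-x) = 1 := by
    rw [← ch_add d hωd, add_neg_cancel, ch_zero]
  have hnorm : ‖ω‖ = 1 := Complex.norm_eq_one_of_pow_eq_one hωd (NeZero.ne d)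
  have h2 : ch d ω x * star (ch d ω x) = 1 := by
    have : ‖ch d ω x‖ = 1 := by
      rw [ch, norm_pow, hnorm, one_pow]
    rw [show (star (ch d ω x) : ℂ) = (starRingEnd ℂ) (ch d ω x) from rfl,
      Complex.mul_conj, Complex.normSq_eq_norm_sq, this]
    norm_num
  exact mul_left_cancel₀ (ch_ne_zero d hωd x) (h2.trans h1.symm)

lemma sum_ch (d : ℕ) [NeZero d] {ω : ℂ} (hω : IsPrimitiveRoot ω d) (c : ZMod d) :
    ∑ i : ZMod d, ch d ω (i * c) = if c = 0 then (d : ℂ) else 0 := by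
  split_ifs with hc
  · subst hc
    simp [ch, ZMod.val_zero, ZMod.card]
  · have hωd : ω ^ d = 1 := hω.pow_eq_one
    set x : ℂ := ω ^ c.val with hx
    have hreindex : ∑ i : ZMod d, ch d ω (i * c) = ∑ k ∈ Finset.range d, x ^ k := by
      refine Finset.sum_bij' (fun i _ => i.val) (fun k _ => (k : ZMod d)) ?_ ?_ ?_ ?_ ?_
      · intro i _; exact Finset.mem_range.mpr (ZMod.val_lt i)
      · intro k _; exact Finset.mem_univ _
      · intro i _; simp [ZMod.natCast_val, ZMod.cast_id]
      · intro k hk; exact ZMod.val_natCast_of_lt (Finset.mem_range.mp hk)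
      · intro i _
        rw [ch, ZMod.val_mul, pow_mod_eq d hωd, mul_comm, pow_mul]
    rw [hreindex]
    have hx1 : x ≠ 1 := by
      apply hω.pow_ne_one_of_pos_of_lt
      · exact (fun h => hc ((ZMod.val_eq_zero c).mp h))
      · exact ZMod.val_lt c
    have hxd : x ^ d = 1 := by
      rw [hx, ← pow_mul, mul_comm, pow_mul, hωd, one_pow]
    have := geom_sum_mul x d
    rw [hxd, sub_self] at this
    rcases mul_eq_zero.mp this with h | h
    · exact h
    · exact absurd (sub_eq_zero.mp h) hx1

open Matrix Kronecker

noncomputable def Weyl (d : ℕ) [NeZero d] (ω : ℂ) (i j : ZMod d) :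
    Matrix (ZMod d) (ZMod d) ℂ :=
  ∑ m : ZMod d, (ω ^ (i * m).val) • Matrix.single m (m + j) (1 : ℂ)

lemma weyl_apply (d : ℕ) [NeZero d] (ω : ℂ) (i j a b : ZMod d) :
    Weyl d ω i j a b = if b = a + j then ch d ω (i * a) else 0 := by
  rw [Weyl, Matrix.sum_apply]
  simp only [Matrix.smul_apply, Matrix.single, Matrix.of_apply, smul_eq_mul]
  rw [Finset.sum_eq_single a]
  · simp [ch, eq_comm]
  · intro m _ hm
    simp [hm, Ne.symm hm]
  · simp

lemma trace_vecMulVec {ι : Type*} [Fintype ι] [DecidableEq ι] (ψ : ι → ℂ)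
    (M : Matrix ι ι ℂ) :
    Matrix.trace (Matrix.vecMulVec ψ (star ψ) * Mᴴ) =
      ∑ u, ∑ v, ψ u * star (ψ v) * star (M u v) := by
  simp only [Matrix.trace, Matrix.diag_apply, Matrix.mul_apply,
    Matrix.vecMulVec_apply, Matrix.conjTranspose_apply, Pi.star_apply]

section Main

variable (d₁ d₂ : ℕ) [NeZero d₁] [NeZero d₂] (ω₁ ω₂ : ℂ) (ψ : ZMod d₁ × ZMod d₂ → ℂ)

noncomputable def coef (p : ZMod d₁ × ZMod d₁) (q : ZMod d₂ × ZMod d₂) : ℂ :=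
  ∑ u : ZMod d₁ × ZMod d₂, ψ u * star (ψ (u.1 + p.2, u.2 + q.2)) *
    (star (ch d₁ ω₁ (p.1 * u.1)) * star (ch d₂ ω₂ (q.1 * u.2)))

lemma coef_eq (p : ZMod d₁ × ZMod d₁) (q : ZMod d₂ × ZMod d₂) :
    Matrix.trace (Matrix.vecMulVec ψ (star ψ) *
      ((Weyl d₁ ω₁ p.1 p.2) ⊗ₖ (Weyl d₂ ω₂ q.1 q.2))ᴴ) =
    coef d₁ d₂ ω₁ ω₂ ψ p q := by
  rw [_root_.trace_vecMulVec, coef]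
  refine Finset.sum_congr rfl fun u _ => ?_
  rw [Fintype.sum_prod_type]
  simp only [Matrix.kroneckerMap_apply, weyl_apply, star_mul', apply_ite (star : ℂ → ℂ),
    star_zero, mul_ite, mul_zero, ite_mul, zero_mul, Finset.sum_ite_eq, Finset.sum_ite_eq',
    Finset.mem_univ, if_true]

end Main

lemma sum_star_ch_mul (d : ℕ) [NeZero d] {ω : ℂ} (hω : IsPrimitiveRoot ω d) (a b : ZMod d) :
    ∑ i : ZMod d, star (ch d ω (i * a)) * ch d ω (i * b) = if b = a then (d : ℂ) else 0 := by
  have hωd := hω.pow_eq_one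
  have h : ∀ i : ZMod d, star (ch d ω (i * a)) * ch d ω (i * b) = ch d ω (i * (b - a)) := by
    intro i
    rw [ch_star d hω, ← ch_add d hωd, ← mul_neg, ← mul_add]
    congr 1
    ring
  simp_rw [h]
  rw [sum_ch d hω]
  congr 1
  simp [sub_eq_zero, eq_comm]

lemma sum_rotate {α β γ M : Type*} [AddCommMonoid M] [Fintype α] [Fintype β] [Fintype γ]
    (f : α → β → γ → M) :
    ∑ a, ∑ b, ∑ c, f a b c = ∑ b, ∑ c, ∑ a, f a b c := by
  rw [Finset.sum_comm]
  exact Finset.sum_congr rfl fun b _ => Finset.sum_comm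

lemma sum_swap4 {α β γ δ M : Type*} [AddCommMonoid M] [Fintype α] [Fintype β] [Fintype γ]
    [Fintype δ] (f : α → β → γ → δ → M) :
    ∑ a, ∑ b, ∑ c, ∑ d, f a b c d = ∑ c, ∑ d, ∑ a, ∑ b, f a b c d := by
  calc ∑ a, ∑ b, ∑ c, ∑ d, f a b c d
      = ∑ a, ∑ c, ∑ d, ∑ b, f a b c d := Finset.sum_congr rfl fun a _ => sum_rotate _
    _ = ∑ c, ∑ d, ∑ a, ∑ b, f a b c d := sum_rotate _

section Core

variable {d₁ d₂ : ℕ} [NeZero d₁] [NeZero d₂] {ω₁ ω₂ : ℂ} (ψ : ZMod d₁ × ZMod d₂ → ℂ)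

lemma core_full (hω₁ : IsPrimitiveRoot ω₁ d₁) (hω₂ : IsPrimitiveRoot ω₂ d₂)
    (j₁ : ZMod d₁) (j₂ : ZMod d₂) :
    ∑ i₁ : ZMod d₁, ∑ i₂ : ZMod d₂,
      coef d₁ d₂ ω₁ ω₂ ψ (i₁, j₁) (i₂, j₂) * star (coef d₁ d₂ ω₁ ω₂ ψ (i₁, j₁) (i₂, j₂))
    = (d₁ : ℂ) * d₂ * ∑ u : ZMod d₁ × ZMod d₂,
        (ψ u * star (ψ u)) *
          (ψ (u.1 + j₁, u.2 + j₂) * star (ψ (u.1 + j₁, u.2 + j₂))) := by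
  have expand : ∀ (i₁ : ZMod d₁) (i₂ : ZMod d₂),
      coef d₁ d₂ ω₁ ω₂ ψ (i₁, j₁) (i₂, j₂) * star (coef d₁ d₂ ω₁ ω₂ ψ (i₁, j₁) (i₂, j₂)) =
      ∑ u : ZMod d₁ × ZMod d₂, ∑ v : ZMod d₁ × ZMod d₂,
        (ψ u * star (ψ (u.1 + j₁, u.2 + j₂)) * star (ψ v) * ψ (v.1 + j₁, v.2 + j₂)) *
          ((star (ch d₁ ω₁ (i₁ * u.1)) * ch d₁ ω₁ (i₁ * v.1)) *
            (star (ch d₂ ω₂ (i₂ * u.2)) * ch d₂ ω₂ (i₂ * v.2))) := by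
    intro i₁ i₂
    rw [coef, star_sum, Finset.sum_mul_sum]
    refine Finset.sum_congr rfl fun u _ => Finset.sum_congr rfl fun v _ => ?_
    simp only [star_mul', star_star]
    ring
  simp_rw [expand]
  rw [sum_swap4 (f := fun (i₁ : ZMod d₁) (i₂ : ZMod d₂) u v =>
    (ψ u * star (ψ (u.1 + j₁, u.2 + j₂)) * star (ψ v) * ψ (v.1 + j₁, v.2 + j₂)) *
      ((star (ch d₁ ω₁ (i₁ * u.1)) * ch d₁ ω₁ (i₁ * v.1)) *
        (star (ch d₂ ω₂ (i₂ * u.2)) * ch d₂ ω₂ (i₂ * v.2))))]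
  rw [Finset.mul_sum]
  refine Finset.sum_congr rfl fun u _ => ?_
  have hv : ∀ v : ZMod d₁ × ZMod d₂,
      ∑ i₁ : ZMod d₁, ∑ i₂ : ZMod d₂,
        (ψ u * star (ψ (u.1 + j₁, u.2 + j₂)) * star (ψ v) * ψ (v.1 + j₁, v.2 + j₂)) *
          ((star (ch d₁ ω₁ (i₁ * u.1)) * ch d₁ ω₁ (i₁ * v.1)) *
            (star (ch d₂ ω₂ (i₂ * u.2)) * ch d₂ ω₂ (i₂ * v.2))) =
      (ψ u * star (ψ (u.1 + j₁, u.2 + j₂)) * star (ψ v) * ψ (v.1 + j₁, v.2 + j₂)) *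
        ((if v.1 = u.1 then (d₁ : ℂ) else 0) * (if v.2 = u.2 then (d₂ : ℂ) else 0)) := by
    intro v
    simp_rw [← Finset.mul_sum]
    rw [← Finset.sum_mul, sum_star_ch_mul d₁ hω₁, sum_star_ch_mul d₂ hω₂]
  simp_rw [hv]
  rw [Fintype.sum_prod_type]
  simp only [mul_ite, mul_zero, ite_mul, zero_mul, Finset.sum_ite_eq, Finset.sum_ite_eq',
    Finset.mem_univ, if_true]
  rw [show ((u.1, u.2) : ZMod d₁ × ZMod d₂) = u from rfl]
  ring

end Core

section Core2

variable {d₁ d₂ : ℕ} [NeZero d₁] [NeZero d₂] {ω₁ ω₂ : ℂ} (ψ : ZMod d₁ × ZMod d₂ → ℂ)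

lemma core_p0 (hω₁ : IsPrimitiveRoot ω₁ d₁) (hω₂ : IsPrimitiveRoot ω₂ d₂) (j₂ : ZMod d₂) :
    ∑ i₂ : ZMod d₂,
      coef d₁ d₂ ω₁ ω₂ ψ (0, 0) (i₂, j₂) * star (coef d₁ d₂ ω₁ ω₂ ψ (0, 0) (i₂, j₂))
    = (d₂ : ℂ) * ∑ x : ZMod d₂,
        (∑ a : ZMod d₁, ψ (a, x) * star (ψ (a, x + j₂))) *
          star (∑ a : ZMod d₁, ψ (a, x) * star (ψ (a, x + j₂))) := by
  have hc : ∀ i₂ : ZMod d₂, coef d₁ d₂ ω₁ ω₂ ψ (0, 0) (i₂, j₂) =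
      ∑ u : ZMod d₁ × ZMod d₂, ψ u * star (ψ (u.1, u.2 + j₂)) * star (ch d₂ ω₂ (i₂ * u.2)) := by
    intro i₂
    rw [coef]
    refine Finset.sum_congr rfl fun u _ => ?_
    simp [ch_zero, zero_mul]
  have expand : ∀ i₂ : ZMod d₂,
      coef d₁ d₂ ω₁ ω₂ ψ (0, 0) (i₂, j₂) * star (coef d₁ d₂ ω₁ ω₂ ψ (0, 0) (i₂, j₂)) =
      ∑ u : ZMod d₁ × ZMod d₂, ∑ v : ZMod d₁ × ZMod d₂,
        (ψ u * star (ψ (u.1, u.2 + j₂)) * star (ψ v) * ψ (v.1, v.2 + j₂)) *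
          (star (ch d₂ ω₂ (i₂ * u.2)) * ch d₂ ω₂ (i₂ * v.2)) := by
    intro i₂
    rw [hc, star_sum, Finset.sum_mul_sum]
    refine Finset.sum_congr rfl fun u _ => Finset.sum_congr rfl fun v _ => ?_
    simp only [star_mul', star_star]
    ring
  simp_rw [expand]
  rw [sum_rotate (f := fun (i₂ : ZMod d₂) u v =>
    (ψ u * star (ψ (u.1, u.2 + j₂)) * star (ψ v) * ψ (v.1, v.2 + j₂)) *
      (star (ch d₂ ω₂ (i₂ * u.2)) * ch d₂ ω₂ (i₂ * v.2)))]
  have hv : ∀ u v : ZMod d₁ × ZMod d₂,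
      ∑ i₂ : ZMod d₂,
        (ψ u * star (ψ (u.1, u.2 + j₂)) * star (ψ v) * ψ (v.1, v.2 + j₂)) *
          (star (ch d₂ ω₂ (i₂ * u.2)) * ch d₂ ω₂ (i₂ * v.2)) =
      (ψ u * star (ψ (u.1, u.2 + j₂)) * star (ψ v) * ψ (v.1, v.2 + j₂)) *
        (if v.2 = u.2 then (d₂ : ℂ) else 0) := by
    intro u v
    rw [← Finset.mul_sum, sum_star_ch_mul d₂ hω₂]
  simp_rw [hv]
  -- now ∑ u, ∑ v, C u v * δ_{v.2=u.2} d₂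
  have hu : ∀ u : ZMod d₁ × ZMod d₂,
      ∑ v : ZMod d₁ × ZMod d₂,
        (ψ u * star (ψ (u.1, u.2 + j₂)) * star (ψ v) * ψ (v.1, v.2 + j₂)) *
          (if v.2 = u.2 then (d₂ : ℂ) else 0) =
      (d₂ : ℂ) * ∑ b : ZMod d₁,
        ψ u * star (ψ (u.1, u.2 + j₂)) * star (ψ (b, u.2)) * ψ (b, u.2 + j₂) := by
    intro u
    rw [Fintype.sum_prod_type, Finset.mul_sum]
    refine Finset.sum_congr rfl fun b _ => ?_
    simp only [mul_ite, mul_zero, Finset.sum_ite_eq, Finset.sum_ite_eq', Finset.mem_univ,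
      if_true]
    ring
  simp_rw [hu]
  rw [← Finset.mul_sum, Fintype.sum_prod_type]
  congr 1
  rw [sum_rotate (f := fun (a : ZMod d₁) (x : ZMod d₂) (b : ZMod d₁) =>
    ψ (a, x) * star (ψ (a, x + j₂)) * star (ψ (b, x)) * ψ (b, x + j₂))]
  refine Finset.sum_congr rfl fun x _ => ?_
  rw [star_sum, Finset.sum_mul_sum, Finset.sum_comm]
  refine Finset.sum_congr rfl fun b _ => Finset.sum_congr rfl fun a _ => ?_
  simp only [star_mul', star_star]
  ring

end Core2

section Core3

variable {d₁ d₂ : ℕ} [NeZero d₁] [NeZero d₂] {ω₁ ω₂ : ℂ} (ψ : ZMod d₁ × ZMod d₂ → ℂ)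

lemma core_q0 (hω₁ : IsPrimitiveRoot ω₁ d₁) (j₁ : ZMod d₁) :
    ∑ i₁ : ZMod d₁,
      coef d₁ d₂ ω₁ ω₂ ψ (i₁, j₁) (0, 0) * star (coef d₁ d₂ ω₁ ω₂ ψ (i₁, j₁) (0, 0))
    = (d₁ : ℂ) * ∑ x : ZMod d₁,
        (∑ b : ZMod d₂, ψ (x, b) * star (ψ (x + j₁, b))) *
          star (∑ b : ZMod d₂, ψ (x, b) * star (ψ (x + j₁, b))) := by
  have hc : ∀ i₁ : ZMod d₁, coef d₁ d₂ ω₁ ω₂ ψ (i₁, j₁) (0, 0) =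
      ∑ u : ZMod d₁ × ZMod d₂, ψ u * star (ψ (u.1 + j₁, u.2)) * star (ch d₁ ω₁ (i₁ * u.1)) := by
    intro i₁
    rw [coef]
    refine Finset.sum_congr rfl fun u _ => ?_
    simp [ch_zero, zero_mul]
  have expand : ∀ i₁ : ZMod d₁,
      coef d₁ d₂ ω₁ ω₂ ψ (i₁, j₁) (0, 0) * star (coef d₁ d₂ ω₁ ω₂ ψ (i₁, j₁) (0, 0)) =
      ∑ u : ZMod d₁ × ZMod d₂, ∑ v : ZMod d₁ × ZMod d₂,
        (ψ u * star (ψ (u.1 + j₁, u.2)) * star (ψ v) * ψ (v.1 + j₁, v.2)) *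
          (star (ch d₁ ω₁ (i₁ * u.1)) * ch d₁ ω₁ (i₁ * v.1)) := by
    intro i₁
    rw [hc, star_sum, Finset.sum_mul_sum]
    refine Finset.sum_congr rfl fun u _ => Finset.sum_congr rfl fun v _ => ?_
    simp only [star_mul', star_star]
    ring
  simp_rw [expand]
  rw [sum_rotate (f := fun (i₁ : ZMod d₁) u v =>
    (ψ u * star (ψ (u.1 + j₁, u.2)) * star (ψ v) * ψ (v.1 + j₁, v.2)) *
      (star (ch d₁ ω₁ (i₁ * u.1)) * ch d₁ ω₁ (i₁ * v.1)))]
  have hv : ∀ u v : ZMod d₁ × ZMod d₂,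
      ∑ i₁ : ZMod d₁,
        (ψ u * star (ψ (u.1 + j₁, u.2)) * star (ψ v) * ψ (v.1 + j₁, v.2)) *
          (star (ch d₁ ω₁ (i₁ * u.1)) * ch d₁ ω₁ (i₁ * v.1)) =
      (ψ u * star (ψ (u.1 + j₁, u.2)) * star (ψ v) * ψ (v.1 + j₁, v.2)) *
        (if v.1 = u.1 then (d₁ : ℂ) else 0) := by
    intro u v
    rw [← Finset.mul_sum, sum_star_ch_mul d₁ hω₁]
  simp_rw [hv]
  have hu : ∀ u : ZMod d₁ × ZMod d₂,
      ∑ v : ZMod d₁ × ZMod d₂,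
        (ψ u * star (ψ (u.1 + j₁, u.2)) * star (ψ v) * ψ (v.1 + j₁, v.2)) *
          (if v.1 = u.1 then (d₁ : ℂ) else 0) =
      (d₁ : ℂ) * ∑ b : ZMod d₂,
        ψ u * star (ψ (u.1 + j₁, u.2)) * star (ψ (u.1, b)) * ψ (u.1 + j₁, b) := by
    intro u
    rw [Fintype.sum_prod_type, Finset.sum_comm, Finset.mul_sum]
    refine Finset.sum_congr rfl fun b _ => ?_
    simp only [mul_ite, mul_zero, Finset.sum_ite_eq, Finset.sum_ite_eq', Finset.mem_univ,
      if_true]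
    ring
  simp_rw [hu]
  rw [← Finset.mul_sum, Fintype.sum_prod_type]
  congr 1
  refine Finset.sum_congr rfl fun x _ => ?_
  rw [star_sum, Finset.sum_mul_sum]
  refine Finset.sum_congr rfl fun a _ => Finset.sum_congr rfl fun b _ => ?_
  simp only [star_mul', star_star]
  ring

lemma coef_zero_zero :
    coef d₁ d₂ ω₁ ω₂ ψ (0, 0) (0, 0) = ∑ u : ZMod d₁ × ZMod d₂, ψ u * star (ψ u) := by
  rw [coef]
  refine Finset.sum_congr rfl fun u _ => ?_
  simp [ch_zero, zero_mul]

end Core3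

lemma sum_perm4 {α β γ δ M : Type*} [AddCommMonoid M] [Fintype α] [Fintype β] [Fintype γ]
    [Fintype δ] (f : α → β → γ → δ → M) :
    ∑ a, ∑ b, ∑ c, ∑ d, f a b c d = ∑ b, ∑ d, ∑ a, ∑ c, f a b c d := by
  calc ∑ a, ∑ b, ∑ c, ∑ d, f a b c d
      = ∑ b, ∑ a, ∑ c, ∑ d, f a b c d := Finset.sum_comm
    _ = ∑ b, ∑ d, ∑ a, ∑ c, f a b c d :=
        Finset.sum_congr rfl fun b _ => (sum_rotate _).trans (sum_rotate _)

section Sums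

variable {d₁ d₂ : ℕ} [NeZero d₁] [NeZero d₂] {ω₁ ω₂ : ℂ} (ψ : ZMod d₁ × ZMod d₂ → ℂ)

lemma sum_all (hω₁ : IsPrimitiveRoot ω₁ d₁) (hω₂ : IsPrimitiveRoot ω₂ d₂)
    (hψ1 : ∑ u : ZMod d₁ × ZMod d₂, ψ u * star (ψ u) = 1) :
    ∑ p : ZMod d₁ × ZMod d₁, ∑ q : ZMod d₂ × ZMod d₂,
      coef d₁ d₂ ω₁ ω₂ ψ p q * star (coef d₁ d₂ ω₁ ω₂ ψ p q) = (d₁ : ℂ) * d₂ := by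
  rw [Fintype.sum_prod_type]
  simp_rw [Fintype.sum_prod_type]
  rw [sum_perm4 (f := fun (i₁ j₁ : ZMod d₁) (i₂ j₂ : ZMod d₂) =>
    coef d₁ d₂ ω₁ ω₂ ψ (i₁, j₁) (i₂, j₂) * star (coef d₁ d₂ ω₁ ω₂ ψ (i₁, j₁) (i₂, j₂)))]
  simp_rw [core_full ψ hω₁ hω₂, ← Finset.mul_sum]
  rw [(sum_rotate (f := fun (j₁ : ZMod d₁) (j₂ : ZMod d₂) (u : ZMod d₁ × ZMod d₂) =>
    (ψ u * star (ψ u)) * (ψ (u.1 + j₁, u.2 + j₂) * star (ψ (u.1 + j₁, u.2 + j₂))))).trans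
    (sum_rotate _)]
  have hu : ∀ u : ZMod d₁ × ZMod d₂,
      ∑ j₁ : ZMod d₁, ∑ j₂ : ZMod d₂,
        (ψ u * star (ψ u)) * (ψ (u.1 + j₁, u.2 + j₂) * star (ψ (u.1 + j₁, u.2 + j₂))) =
      ψ u * star (ψ u) := by
    intro u
    simp_rw [← Finset.mul_sum]
    have h2 : ∀ j₁ : ZMod d₁,
        ∑ j₂ : ZMod d₂, ψ (u.1 + j₁, u.2 + j₂) * star (ψ (u.1 + j₁, u.2 + j₂)) =
        ∑ w₂ : ZMod d₂, ψ (u.1 + j₁, w₂) * star (ψ (u.1 + j₁, w₂)) :=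
      fun j₁ => Fintype.sum_equiv (Equiv.addLeft u.2) _ _ (fun j₂ => rfl)
    simp_rw [h2]
    have h1 : ∑ j₁ : ZMod d₁, ∑ w₂ : ZMod d₂, ψ (u.1 + j₁, w₂) * star (ψ (u.1 + j₁, w₂)) =
        ∑ w₁ : ZMod d₁, ∑ w₂ : ZMod d₂, ψ (w₁, w₂) * star (ψ (w₁, w₂)) :=
      Fintype.sum_equiv (Equiv.addLeft u.1) _ _ (fun j₁ => rfl)
    rw [h1, ((Fintype.sum_prod_type (f := fun w : ZMod d₁ × ZMod d₂ =>
      ψ w * star (ψ w))).symm.trans hψ1 : _), mul_one]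
  simp_rw [hu]
  rw [hψ1, mul_one]

lemma sum_p0 (hω₁ : IsPrimitiveRoot ω₁ d₁) (hω₂ : IsPrimitiveRoot ω₂ d₂) :
    ∑ q : ZMod d₂ × ZMod d₂,
      coef d₁ d₂ ω₁ ω₂ ψ (0, 0) q * star (coef d₁ d₂ ω₁ ω₂ ψ (0, 0) q) =
    (d₂ : ℂ) * ∑ x : ZMod d₂, ∑ y : ZMod d₂,
      (∑ a : ZMod d₁, ψ (a, x) * star (ψ (a, y))) *
        star (∑ a : ZMod d₁, ψ (a, x) * star (ψ (a, y))) := by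
  rw [Fintype.sum_prod_type, Finset.sum_comm]
  simp_rw [core_p0 ψ hω₁ hω₂, ← Finset.mul_sum]
  congr 1
  rw [Finset.sum_comm]
  refine Finset.sum_congr rfl fun x _ => ?_
  exact Fintype.sum_equiv (Equiv.addLeft x) _ _ (fun j₂ => rfl)

lemma sum_q0 (hω₁ : IsPrimitiveRoot ω₁ d₁) :
    ∑ p : ZMod d₁ × ZMod d₁,
      coef d₁ d₂ ω₁ ω₂ ψ p (0, 0) * star (coef d₁ d₂ ω₁ ω₂ ψ p (0, 0)) =
    (d₁ : ℂ) * ∑ x : ZMod d₁, ∑ y : ZMod d₁,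
      (∑ b : ZMod d₂, ψ (x, b) * star (ψ (y, b))) *
        star (∑ b : ZMod d₂, ψ (x, b) * star (ψ (y, b))) := by
  rw [Fintype.sum_prod_type, Finset.sum_comm]
  simp_rw [core_q0 ψ hω₁, ← Finset.mul_sum]
  congr 1
  rw [Finset.sum_comm]
  refine Finset.sum_congr rfl fun x _ => ?_
  exact Fintype.sum_equiv (Equiv.addLeft x) _ _ (fun j₁ => rfl)

end Sums

section Marg

variable {d₁ d₂ : ℕ} [NeZero d₁] [NeZero d₂] (ψ : ZMod d₁ × ZMod d₂ → ℂ)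

lemma marg_eq :
    ∑ x : ZMod d₂, ∑ y : ZMod d₂,
      (∑ a : ZMod d₁, ψ (a, x) * star (ψ (a, y))) *
        star (∑ a : ZMod d₁, ψ (a, x) * star (ψ (a, y))) =
    ∑ x : ZMod d₁, ∑ y : ZMod d₁,
      (∑ b : ZMod d₂, ψ (x, b) * star (ψ (y, b))) *
        star (∑ b : ZMod d₂, ψ (x, b) * star (ψ (y, b))) := by
  have L : ∑ x : ZMod d₂, ∑ y : ZMod d₂,
      (∑ a : ZMod d₁, ψ (a, x) * star (ψ (a, y))) *
        star (∑ a : ZMod d₁, ψ (a, x) * star (ψ (a, y))) =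
      ∑ x : ZMod d₂, ∑ y : ZMod d₂, ∑ a : ZMod d₁, ∑ b : ZMod d₁,
        ψ (a, x) * star (ψ (a, y)) * star (ψ (b, x)) * ψ (b, y) := by
    refine Finset.sum_congr rfl fun x _ => Finset.sum_congr rfl fun y _ => ?_
    rw [star_sum, Finset.sum_mul_sum]
    refine Finset.sum_congr rfl fun a _ => Finset.sum_congr rfl fun b _ => ?_
    simp only [star_mul', star_star]
    ring
  have R : ∑ x : ZMod d₁, ∑ y : ZMod d₁,
      (∑ b : ZMod d₂, ψ (x, b) * star (ψ (y, b))) *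
        star (∑ b : ZMod d₂, ψ (x, b) * star (ψ (y, b))) =
      ∑ x : ZMod d₁, ∑ y : ZMod d₁, ∑ a : ZMod d₂, ∑ b : ZMod d₂,
        ψ (x, a) * star (ψ (y, a)) * star (ψ (x, b)) * ψ (y, b) := by
    refine Finset.sum_congr rfl fun x _ => Finset.sum_congr rfl fun y _ => ?_
    rw [star_sum, Finset.sum_mul_sum]
    refine Finset.sum_congr rfl fun a _ => Finset.sum_congr rfl fun b _ => ?_
    simp only [star_mul', star_star]
    ring
  rw [L, R, sum_swap4 (f := fun (x y : ZMod d₁) (a b : ZMod d₂) =>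
    ψ (x, a) * star (ψ (y, a)) * star (ψ (x, b)) * ψ (y, b))]
  refine Finset.sum_congr rfl fun x _ => Finset.sum_congr rfl fun y _ =>
    Finset.sum_congr rfl fun a _ => Finset.sum_congr rfl fun b _ => ?_
  ring

end Marg

lemma purity_ge {n : ℕ} [NeZero n] (G : ZMod n → ZMod n → ℂ) (g : ZMod n → ℝ)
    (hdiag : ∀ x, G x x = (g x : ℂ)) (htr : ∑ x, g x = 1) :
    1 / (n : ℝ) ≤ ∑ x, ∑ y, Complex.normSq (G x y) := by
  have h3 : (∑ x : ZMod n, g x) ^ 2 ≤ (n : ℝ) * ∑ x, (g x) ^ 2 := by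
    simpa [ZMod.card] using sq_sum_le_card_mul_sum_sq (s := Finset.univ) (f := g)
  have h4 : ∑ x : ZMod n, (g x) ^ 2 ≤ ∑ x, ∑ y, Complex.normSq (G x y) := by
    refine Finset.sum_le_sum fun x _ => ?_
    have : (g x) ^ 2 = Complex.normSq (G x x) := by
      rw [hdiag]
      simp [Complex.normSq_ofReal, sq]
    rw [this]
    exact Finset.single_le_sum (fun y _ => Complex.normSq_nonneg _) (Finset.mem_univ x)
  rw [htr] at h3
  have hn : (0 : ℝ) < n := by
    have := NeZero.pos n
    exact_mod_cast this
  rw [div_le_iff₀ hn]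
  nlinarith

lemma mul_star_eq (z : ℂ) : z * star z = (Complex.normSq z : ℂ) := Complex.mul_conj z

/-- For a bipartite pure state `ρ = |ψ⟩⟨ψ|` on `ℂ^{d₁} ⊗ ℂ^{d₂}`, the squared
norm of the correlation tensor `T^{(12)}`, with entries
`tr(ρ (A_{i₁j₁} ⊗ A_{i₂j₂})†)` over nonzero Weyl indices, satisfies
`‖T^{(12)}‖² ≤ min{d₁d₂ − d₁/d₂, d₁d₂ − d₂/d₁}`. -/
theorem bipartite_pure_corr_bound (d₁ d₂ : ℕ) [NeZero d₁] [NeZero d₂]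
    (ω₁ ω₂ : ℂ) (hω₁ : IsPrimitiveRoot ω₁ d₁) (hω₂ : IsPrimitiveRoot ω₂ d₂)
    (ψ : ZMod d₁ × ZMod d₂ → ℂ) (hψ : ∑ v, ‖ψ v‖ ^ 2 = 1)
    (ρ : Matrix (ZMod d₁ × ZMod d₂) (ZMod d₁ × ZMod d₂) ℂ)
    (hρ : ρ = Matrix.vecMulVec ψ (star ψ)) :
    ∑ p ∈ Finset.univ.filter (fun p : ZMod d₁ × ZMod d₁ => p ≠ (0, 0)),
      ∑ q ∈ Finset.univ.filter (fun q : ZMod d₂ × ZMod d₂ => q ≠ (0, 0)),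
        ‖Matrix.trace (ρ * ((Weyl d₁ ω₁ p.1 p.2) ⊗ₖ (Weyl d₂ ω₂ q.1 q.2))ᴴ)‖ ^ 2 ≤
      min ((d₁ : ℝ) * d₂ - d₁ / d₂) ((d₁ : ℝ) * d₂ - d₂ / d₁) := by
  subst hρ
  set F : (ZMod d₁ × ZMod d₁) → (ZMod d₂ × ZMod d₂) → ℂ :=
    fun p q => coef d₁ d₂ ω₁ ω₂ ψ p q * star (coef d₁ d₂ ω₁ ω₂ ψ p q) with hF
  have hψR : ∑ v : ZMod d₁ × ZMod d₂, Complex.normSq (ψ v) = 1 := by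
    rw [← hψ]
    exact Finset.sum_congr rfl fun v _ => by
      rw [Complex.normSq_eq_norm_sq]
  have hψ1 : ∑ u : ZMod d₁ × ZMod d₂, ψ u * star (ψ u) = 1 := by
    have h : ∀ u, ψ u * star (ψ u) = ((Complex.normSq (ψ u) : ℝ) : ℂ) :=
      fun u => Complex.mul_conj (ψ u)
    simp_rw [h]
    rw [← Complex.ofReal_sum, hψR, Complex.ofReal_one]
  set G₂ : ZMod d₂ → ZMod d₂ → ℂ :=
    fun x y => ∑ a : ZMod d₁, ψ (a, x) * star (ψ (a, y)) with hG₂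
  set G₁ : ZMod d₁ → ZMod d₁ → ℂ :=
    fun x y => ∑ b : ZMod d₂, ψ (x, b) * star (ψ (y, b)) with hG₁
  set P : ℝ := ∑ x, ∑ y, Complex.normSq (G₂ x y) with hP
  set Q : ℝ := ∑ x, ∑ y, Complex.normSq (G₁ x y) with hQ
  have hGP : ∑ x, ∑ y, G₂ x y * star (G₂ x y) = (P : ℂ) := by
    rw [hP]
    simp_rw [mul_star_eq]
    norm_cast
  have hGQ : ∑ x, ∑ y, G₁ x y * star (G₁ x y) = (Q : ℂ) := by
    rw [hQ]
    simp_rw [mul_star_eq]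
    norm_cast
  have hPQ : P = Q := by
    have h := marg_eq ψ
    rw [show (∑ x : ZMod d₂, ∑ y : ZMod d₂,
        (∑ a : ZMod d₁, ψ (a, x) * star (ψ (a, y))) *
          star (∑ a : ZMod d₁, ψ (a, x) * star (ψ (a, y)))) =
        ∑ x, ∑ y, G₂ x y * star (G₂ x y) from rfl, hGP] at h
    rw [show (∑ x : ZMod d₁, ∑ y : ZMod d₁,
        (∑ b : ZMod d₂, ψ (x, b) * star (ψ (y, b))) *
          star (∑ b : ZMod d₂, ψ (x, b) * star (ψ (y, b)))) =
        ∑ x, ∑ y, G₁ x y * star (G₁ x y) from rfl, hGQ] at h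
    exact_mod_cast h
  have hPge : 1 / (d₂ : ℝ) ≤ P := by
    refine purity_ge G₂ (fun x => ∑ a : ZMod d₁, Complex.normSq (ψ (a, x))) ?_ ?_
    · intro x
      rw [hG₂]
      simp_rw [mul_star_eq]
      norm_cast
    · rw [← hψR, Fintype.sum_prod_type, Finset.sum_comm]
  have hQge : 1 / (d₁ : ℝ) ≤ Q := by
    refine purity_ge G₁ (fun x => ∑ b : ZMod d₂, Complex.normSq (ψ (x, b))) ?_ ?_
    · intro x
      rw [hG₁]
      simp_rw [mul_star_eq]
      norm_cast
    · rw [← hψR, Fintype.sum_prod_type]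
  have hA : ∑ p, ∑ q, F p q = (d₁ : ℂ) * d₂ := sum_all ψ hω₁ hω₂ hψ1
  have hB : ∑ q, F (0, 0) q = (d₂ : ℂ) * P := by
    rw [hF, sum_p0 ψ hω₁ hω₂]
    rw [show (∑ x : ZMod d₂, ∑ y : ZMod d₂,
        (∑ a : ZMod d₁, ψ (a, x) * star (ψ (a, y))) *
          star (∑ a : ZMod d₁, ψ (a, x) * star (ψ (a, y)))) =
        ∑ x, ∑ y, G₂ x y * star (G₂ x y) from rfl, hGP]
  have hC : ∑ p, F p (0, 0) = (d₁ : ℂ) * Q := by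
    rw [hF, sum_q0 ψ hω₁]
    rw [show (∑ x : ZMod d₁, ∑ y : ZMod d₁,
        (∑ b : ZMod d₂, ψ (x, b) * star (ψ (y, b))) *
          star (∑ b : ZMod d₂, ψ (x, b) * star (ψ (y, b)))) =
        ∑ x, ∑ y, G₁ x y * star (G₁ x y) from rfl, hGQ]
  have hD : F (0, 0) (0, 0) = 1 := by
    rw [hF]
    simp only
    rw [coef_zero_zero, hψ1]
    simp
  have key : ∑ p ∈ Finset.univ.filter (fun p : ZMod d₁ × ZMod d₁ => p ≠ (0, 0)),
      ∑ q ∈ Finset.univ.filter (fun q : ZMod d₂ × ZMod d₂ => q ≠ (0, 0)), F p q =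
      (d₁ : ℂ) * d₂ - (d₂ : ℂ) * P - (d₁ : ℂ) * Q + 1 := by
    rw [Finset.filter_ne', Finset.filter_ne']
    have inner : ∀ p, ∑ q ∈ Finset.univ.erase ((0, 0) : ZMod d₂ × ZMod d₂), F p q =
        (∑ q, F p q) - F p (0, 0) :=
      fun p => Finset.sum_erase_eq_sub (Finset.mem_univ _)
    simp_rw [inner]
    rw [Finset.sum_sub_distrib, Finset.sum_erase_eq_sub (Finset.mem_univ _),
      Finset.sum_erase_eq_sub (Finset.mem_univ _), hA, hB, hC, hD]
    ring
  have hterm : ∀ (p : ZMod d₁ × ZMod d₁) (q : ZMod d₂ × ZMod d₂),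
      ‖Matrix.trace (Matrix.vecMulVec ψ (star ψ) *
        ((Weyl d₁ ω₁ p.1 p.2) ⊗ₖ (Weyl d₂ ω₂ q.1 q.2))ᴴ)‖ ^ 2 = (F p q).re := by
    intro p q
    rw [coef_eq, hF]
    simp only
    rw [show (star (coef d₁ d₂ ω₁ ω₂ ψ p q)) = (starRingEnd ℂ) (coef d₁ d₂ ω₁ ω₂ ψ p q)
      from rfl, Complex.mul_conj, Complex.ofReal_re, Complex.normSq_eq_norm_sq]
  calc ∑ p ∈ Finset.univ.filter (fun p : ZMod d₁ × ZMod d₁ => p ≠ (0, 0)),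
      ∑ q ∈ Finset.univ.filter (fun q : ZMod d₂ × ZMod d₂ => q ≠ (0, 0)),
        ‖Matrix.trace (Matrix.vecMulVec ψ (star ψ) *
          ((Weyl d₁ ω₁ p.1 p.2) ⊗ₖ (Weyl d₂ ω₂ q.1 q.2))ᴴ)‖ ^ 2
      = (∑ p ∈ Finset.univ.filter (fun p : ZMod d₁ × ZMod d₁ => p ≠ (0, 0)),
          ∑ q ∈ Finset.univ.filter (fun q : ZMod d₂ × ZMod d₂ => q ≠ (0, 0)), F p q).re := by
        rw [Complex.re_sum]
        refine Finset.sum_congr rfl fun p _ => ?_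
        rw [Complex.re_sum]
        exact Finset.sum_congr rfl fun q _ => hterm p q
    _ = (d₁ : ℝ) * d₂ - (d₂ : ℝ) * P - (d₁ : ℝ) * Q + 1 := by
        rw [key]
        rw [show ((d₁ : ℂ) * d₂ - (d₂ : ℂ) * P - (d₁ : ℂ) * Q + 1 : ℂ) =
          (((d₁ : ℝ) * d₂ - (d₂ : ℝ) * P - (d₁ : ℝ) * Q + 1 : ℝ) : ℂ) by push_cast; ring]
        rw [Complex.ofReal_re]
    _ ≤ min ((d₁ : ℝ) * d₂ - d₁ / d₂) ((d₁ : ℝ) * d₂ - d₂ / d₁) := by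
        have hd₁ : (0 : ℝ) < d₁ := by exact_mod_cast NeZero.pos d₁
        have hd₂ : (0 : ℝ) < d₂ := by exact_mod_cast NeZero.pos d₂
        have h1 : (1 : ℝ) ≤ (d₂ : ℝ) * P := by
          have h := mul_le_mul_of_nonneg_left hPge (le_of_lt hd₂)
          rwa [mul_one_div, div_self (ne_of_gt hd₂)] at h
        have h2 : (d₁ : ℝ) / d₂ ≤ (d₁ : ℝ) * Q := by
          rw [div_eq_mul_one_div]
          exact mul_le_mul_of_nonneg_left (hPQ ▸ hPge) (le_of_lt hd₁)
        have h3 : (1 : ℝ) ≤ (d₁ : ℝ) * Q := by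
          have h := mul_le_mul_of_nonneg_left hQge (le_of_lt hd₁)
          rwa [mul_one_div, div_self (ne_of_gt hd₁)] at h
        have h4 : (d₂ : ℝ) / d₁ ≤ (d₂ : ℝ) * P := by
          rw [div_eq_mul_one_div]
          refine mul_le_mul_of_nonneg_left ?_ (le_of_lt hd₂)
          calc 1 / (d₁ : ℝ) ≤ Q := hQge
            _ = P := hPQ.symm
        apply le_min
        · linarith
        · linarith
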